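/- There is no minimal pair of punctual degrees: for any coinfinite primitive recursive sets X, Y with R_X and R_Y each having infinitely many classes, there exists a coinfinite primitive recursive Z such that R_Z ≤_pr R_X, R_Z ≤_pr R_Y, and R_Z has infinitely many equivalence classes (so the infimum is never a finite/trivial relation when both arguments are non-finite). -/

import Mathlib

/-- The equivalence relation `R_X`: `x R_X y` iff both in `X` or `x = y`. -/
def REq (X : Set ℕ) (x y : ℕ) : Prop := (x ∈ X ∧ y ∈ X) ∨ x = y

/-- Primitive recursive reducibility between binary relations on ℕ. -/
def PrRed (R S : ℕ → ℕ → Prop) : Prop :=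
  ∃ f : ℕ → ℕ, Primrec f ∧ ∀ x y, R x y ↔ S (f x) (f y)

/-- pr-bireducibility. -/
def PrEquiv (R S : ℕ → ℕ → Prop) : Prop := PrRed R S ∧ PrRed S R

/-- `X` is a primitive recursive set. -/
def PRSet (X : Set ℕ) : Prop :=
  ∃ f : ℕ → Bool, Primrec f ∧ ∀ n, n ∈ X ↔ f n = true

/-- `#(0^X)[s]`: the number of elements of the complement of `X` that are `≤ s`. -/
noncomputable def zc (X : Set ℕ) (s : ℕ) : ℕ := {k | k ≤ s ∧ k ∉ X}.ncard

/-! Put `m s := min (zc X s) (zc Y s)`. Since `zc X` and `zc Y` grow by at most one per step, the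
infimum set `Z` satisfies `zc Z s = m s - m 0`, which is unbounded and at most `zc X s`, `zc Y s`.
That inequality is all a reduction `R_Z ≤_pr R_W` needs when `0 ∈ Z`: send the `k`-th element of
`Zᶜ` to the `k`-th element of `Wᶜ`, which a search bounded by the argument finds, and send all of
`Z` to one point of `W` (or, if `W = ∅`, so that `R_W` is equality, map `Zᶜ` identically and `Z`
to `0`). -/

open Filter Set

namespace Nat

variable {p : ℕ → Prop} [DecidablePred p]

theorem tendsto_count_atTop_iff : Tendsto (count p) atTop atTop ↔ (Set.ofPred p).Infinite := by
  refine ⟨fun h hfin => ?_, fun h => ?_⟩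
  · obtain ⟨n, hn⟩ := (tendsto_atTop.1 h (hfin.toFinset.card + 1)).exists
    exact (count_le_card hfin n).not_gt hn
  · exact tendsto_atTop_atTop_of_monotone (count_monotone p)
      fun n => ⟨nth p n, (count_nth_of_infinite h n).ge⟩

theorem findGreatest_count_le_eq_nth {n x : ℕ} (h : n < count p (x + 1)) :
    findGreatest (fun j => count p j ≤ n) x = nth p n := by
  have hn : ∀ hf : (Set.ofPred p).Finite, n < hf.toFinset.card :=
    fun hf => h.trans_le (count_le_card hf _)
  refine findGreatest_eq_iff.2 ⟨Nat.lt_succ_iff.1 (nth_lt_of_lt_count h),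
    fun _ => (count_nth hn).le, fun k hk _ hle => ?_⟩
  have := count_monotone p hk
  rw [count_nth_succ hn] at this
  omega

end Nat

open Nat

theorem zc_eq_count (X : Set ℕ) [DecidablePred (· ∈ X)] (s : ℕ) :
    zc X s = count (· ∉ X) (s + 1) := by
  rw [count_eq_card_filter_range, zc, ← Set.ncard_coe_finset]
  congr 1
  ext k
  simp

theorem zc_succ (X : Set ℕ) [DecidablePred (· ∈ X)] (s : ℕ) :
    zc X (s + 1) = zc X s + if s + 1 ∈ X then 0 else 1 := by
  rw [zc_eq_count, zc_eq_count, count_succ]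
  split_ifs <;> simp_all

theorem tendsto_zc_atTop_iff {X : Set ℕ} : Tendsto (zc X) atTop atTop ↔ Xᶜ.Infinite := by
  classical
  simp only [funext (zc_eq_count X)]
  exact (tendsto_add_atTop_iff_nat 1).trans tendsto_count_atTop_iff

theorem PRSet.primrec_count_compl {X : Set ℕ} [DecidablePred (· ∈ X)] (hX : PRSet X) :
    Primrec (count (· ∉ X)) := by
  obtain ⟨χ, hχ, hmem⟩ := hX
  have : Primrec fun n => ((List.range n).filter fun k => χ k = false).length :=
    Primrec.list_length.comp ((Primrec.listFilter (p := fun k => χ k = false)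
      (Primrec.primrecPred ((Primrec.not.comp hχ).of_eq fun k => by simp))).comp
        Primrec.list_range)
  refine this.of_eq fun n => ?_
  simp [count, List.countP_eq_length_filter, hmem]

theorem PRSet.primrec_zc {X : Set ℕ} (hX : PRSet X) : Primrec (zc X) := by
  classical
  exact (hX.primrec_count_compl.comp Primrec.succ).of_eq fun s => (zc_eq_count X s).symm

theorem prRed_rEq_of_injOn {Z W : Set ℕ} (hZ : PRSet Z) {g : ℕ → ℕ} (hg : Primrec g)
    (hinj : InjOn g Zᶜ) (hmaps : MapsTo g Zᶜ Wᶜ) {p : ℕ} (hp : p ∉ g '' Zᶜ) :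
    PrRed (REq Z) (REq W) := by
  classical
  obtain ⟨χ, hχ, hmem⟩ := hZ
  refine ⟨fun x => bif χ x then p else g x, hχ.cond (Primrec.const p) hg, fun x y => ?_⟩
  have hf : ∀ x, (bif χ x then p else g x) = if x ∈ Z then p else g x := fun x => by
    cases hc : χ x <;> simp [hmem, hc]
  have hg_ne : ∀ x ∉ Z, g x ≠ p := fun x hx h => hp ⟨x, hx, h⟩
  simp only [hf, REq]
  by_cases hx : x ∈ Z <;> by_cases hy : y ∈ Z
  · simp [hx, hy]
  · have hxy : x ≠ y := by rintro rfl; exact hy hx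
    have hgy : g y ∉ W := hmaps hy
    simp [hx, hy, hgy, (hg_ne y hy).symm, hxy]
  · have hxy : x ≠ y := by rintro rfl; exact hx hy
    have hgx : g x ∉ W := hmaps hx
    simp [hx, hy, hgx, hg_ne x hx, hxy]
  · have hgx : g x ∉ W := hmaps hx
    simp [hx, hy, hgx, hinj.eq_iff hx hy]

theorem prRed_rEq_of_zc_le {Z W : Set ℕ} (hZ : PRSet Z) (hW : PRSet W) (hZ0 : 0 ∈ Z)
    (hle : ∀ s, zc Z s ≤ zc W s) : PrRed (REq Z) (REq W) := by
  classical
  rcases W.eq_empty_or_nonempty with rfl | ⟨p, hp⟩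
  · refine prRed_rEq_of_injOn hZ Primrec.id (injOn_id _) (by simp [MapsTo]) (p := 0) ?_
    simpa using hZ0
  have hlt : ∀ x ∉ Z, count (· ∉ Z) x < count (· ∉ W) (x + 1) := fun x hx => by
    have := hle x
    rw [zc_eq_count, zc_eq_count, count_succ_eq_succ_count_iff.2 hx] at this
    omega
  set g := fun x => findGreatest (fun j => count (· ∉ W) j ≤ count (· ∉ Z) x) x
  have hg : ∀ x ∉ Z, g x = nth (· ∉ W) (count (· ∉ Z) x) :=
    fun x hx => findGreatest_count_le_eq_nth (hlt x hx)
  have hvalid : ∀ x ∉ Z, ∀ hf : (Set.ofPred (· ∉ W)).Finite,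
      count (· ∉ Z) x < hf.toFinset.card :=
    fun x hx hf => (hlt x hx).trans_le (count_le_card hf _)
  have hmaps : MapsTo g Zᶜ Wᶜ := fun x hx => by
    rw [hg x hx]
    exact nth_mem _ (hvalid x hx)
  refine prRed_rEq_of_injOn hZ (g := g) ?_ (fun x hx y hy hxy => ?_) hmaps
    fun ⟨x, hx, hxp⟩ => hmaps hx (hxp ▸ hp)
  · exact Primrec.nat_findGreatest Primrec.id <| Primrec.nat_le.comp
      (hW.primrec_count_compl.comp Primrec.snd) (hZ.primrec_count_compl.comp Primrec.fst)
  · rw [hg x hx, hg y hy] at hxy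
    have := congrArg (count (· ∉ W)) hxy
    rw [count_nth (hvalid x hx), count_nth (hvalid y hy)] at this
    exact count_injective hx hy this

def infSet (X Y : Set ℕ) : Set ℕ :=
  {s | ∀ t, s = t + 1 → min (zc X (t + 1)) (zc Y (t + 1)) ≤ min (zc X t) (zc Y t)}

theorem zero_mem_infSet (X Y : Set ℕ) : 0 ∈ infSet X Y := fun _ h => by omega

theorem succ_mem_infSet_iff {X Y : Set ℕ} {t : ℕ} :
    t + 1 ∈ infSet X Y ↔ min (zc X (t + 1)) (zc Y (t + 1)) ≤ min (zc X t) (zc Y t) :=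
  ⟨fun h => h t rfl, fun h _ ht => Nat.succ_injective ht ▸ h⟩

theorem zc_infSet_add (X Y : Set ℕ) (s : ℕ) :
    zc (infSet X Y) s + min (zc X 0) (zc Y 0) = min (zc X s) (zc Y s) := by
  classical
  induction s with
  | zero => simp [zc_eq_count, count_succ, zero_mem_infSet]
  | succ t ih =>
    have hX := zc_succ X t
    have hY := zc_succ Y t
    have hZ := zc_succ (infSet X Y) t
    rw [succ_mem_infSet_iff] at hZ
    split_ifs at hX hY hZ <;> omega

theorem zc_infSet_le (X Y : Set ℕ) (s : ℕ) : zc (infSet X Y) s ≤ min (zc X s) (zc Y s) :=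
  (zc_infSet_add X Y s).symm ▸ Nat.le_add_right _ _

theorem PRSet.infSet {X Y : Set ℕ} (hX : PRSet X) (hY : PRSet Y) : PRSet (infSet X Y) := by
  refine ⟨fun s => s == 0 || decide (min (zc X s) (zc Y s) ≤ min (zc X (s - 1)) (zc Y (s - 1))),
    ?_, fun s => ?_⟩
  · have hm : ∀ {f : ℕ → ℕ}, Primrec f → Primrec fun s => min (zc X (f s)) (zc Y (f s)) :=
      fun hf => Primrec.nat_min.comp (hX.primrec_zc.comp hf) (hY.primrec_zc.comp hf)
    exact Primrec.or.comp (Primrec.beq.comp Primrec.id (Primrec.const 0))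
      (Primrec.nat_le.comp (hm Primrec.id) (hm Primrec.pred)).decide
  · cases s with
    | zero => simp [zero_mem_infSet]
    | succ t => simp [succ_mem_infSet_iff]

theorem infinite_compl_infSet {X Y : Set ℕ} (hXc : Xᶜ.Infinite) (hYc : Yᶜ.Infinite) :
    (infSet X Y)ᶜ.Infinite := by
  rw [← tendsto_zc_atTop_iff] at *
  refine ((tendsto_sub_atTop_nat (min (zc X 0) (zc Y 0))).comp
    (tendsto_inf_atTop _ hXc hYc)).congr fun s => ?_
  have := zc_infSet_add X Y s
  simp only [Function.comp_apply]
  omega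

theorem stmt_11 (X Y : Set ℕ) (hX : PRSet X) (hY : PRSet Y)
    (hXc : Xᶜ.Infinite) (hYc : Yᶜ.Infinite) :
    ∃ Z : Set ℕ, PRSet Z ∧ Zᶜ.Infinite ∧
      PrRed (REq Z) (REq X) ∧ PrRed (REq Z) (REq Y) := by
  have hZ := hX.infSet hY
  refine ⟨infSet X Y, hZ, infinite_compl_infSet hXc hYc, ?_, ?_⟩
  · exact prRed_rEq_of_zc_le hZ hX (zero_mem_infSet X Y)
      fun s => (zc_infSet_le X Y s).trans (min_le_left _ _)
  · exact prRed_rEq_of_zc_le hZ hY (zero_mem_infSet X Y)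
      fun s => (zc_infSet_le X Y s).trans (min_le_right _ _)
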